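/- Let p be an odd prime and H_p = ⟨x, y : x^{p²} = y^p = 1, [x,y] = x^p⟩ the nonabelian group of order p³ and exponent p². For t ∈ ℤ/p define γ_t with γ_t(x): x↦x, y↦x^{−pt}y and γ_t(y): x↦x^{1+pt}, y↦y, extended with γ_t(Z(H_p)) = 1. Then with ν(h) = γ_t(h)∘ρ(h), one has [ν(x), ν(y^d)] = ν(x^{pd(1+2t)}) for all integers d; in particular the regular subgroup ν(H_p) is abelian if and only if t ≡ −1/2 (mod p). -/

import Mathlib

/-- The relators of the presentation
`⟨x, y : x^(p²) = y^p = 1, [x,y] = x^p⟩`, where `[x,y] = x⁻¹y⁻¹xy`. -/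
def hpRels (p : ℕ) : Set (FreeGroup (Fin 2)) :=
  { FreeGroup.of 0 ^ p ^ 2, FreeGroup.of 1 ^ p,
    (FreeGroup.of 0)⁻¹ * (FreeGroup.of 1)⁻¹ * FreeGroup.of 0 * FreeGroup.of 1
      * (FreeGroup.of 0 ^ p)⁻¹ }

/-- The group `H_p = ⟨x, y : x^(p²) = y^p = 1, [x,y] = x^p⟩`, the nonabelian
group of order `p³` and exponent `p²`. -/
abbrev HpGroup (p : ℕ) := PresentedGroup (hpRels p)

/-- The generator `x` of `H_p`. -/
def hpX (p : ℕ) : HpGroup p := PresentedGroup.of 0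

/-- The generator `y` of `H_p`. -/
def hpY (p : ℕ) : HpGroup p := PresentedGroup.of 1

lemma hpRel_one (p : ℕ) {r : FreeGroup (Fin 2)} (hr : r ∈ hpRels p) :
    PresentedGroup.mk (hpRels p) r = 1 :=
  (QuotientGroup.eq_one_iff r).mpr (Subgroup.subset_normalClosure hr)

lemma relX (p : ℕ) : hpX p ^ (p ^ 2) = 1 := by
  have := hpRel_one p (r := FreeGroup.of 0 ^ p ^ 2) (by left; rfl)
  rwa [map_pow] at this

lemma relY (p : ℕ) : hpY p ^ p = 1 := by
  have := hpRel_one p (r := FreeGroup.of 1 ^ p) (by right; left; rfl)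
  rwa [map_pow] at this

lemma relC (p : ℕ) : (hpY p)⁻¹ * hpX p * hpY p = hpX p * hpX p ^ p := by
  have := hpRel_one p
    (r := (FreeGroup.of 0)⁻¹ * (FreeGroup.of 1)⁻¹ * FreeGroup.of 0 * FreeGroup.of 1
      * (FreeGroup.of 0 ^ p)⁻¹) (by right; right; rfl)
  simp only [map_mul, map_inv, map_pow] at this
  have h2 : (hpX p)⁻¹ * (hpY p)⁻¹ * hpX p * hpY p = hpX p ^ p := mul_inv_eq_one.mp this
  calc (hpY p)⁻¹ * hpX p * hpY p
      = hpX p * ((hpX p)⁻¹ * (hpY p)⁻¹ * hpX p * hpY p) := by group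
    _ = hpX p * hpX p ^ p := by rw [h2]

lemma p_mul_p (p : ℕ) : ((p : ZMod (p^2)) * p = 0) := by
  have : ((p^2 : ℕ) : ZMod (p^2)) = 0 := ZMod.natCast_self _
  push_cast at this
  linear_combination this

lemma one_add_mul_p_pow (p : ℕ) (c : ZMod (p^2)) (n : ℕ) :
    (1 + c * (p : ZMod (p^2))) ^ n = 1 + (n : ZMod (p^2)) * (c * (p : ZMod (p^2))) := by
  induction n with
  | zero => simp
  | succ n ih =>
    push_cast
    linear_combination (1 + c * (p : ZMod (p^2))) * ih + ((n : ZMod (p^2)) * c * c) * p_mul_p p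

def uMod (p : ℕ) : (ZMod (p^2))ˣ where
  val := 1 - p
  inv := 1 + p
  val_inv := by linear_combination -p_mul_p p
  inv_val := by linear_combination -p_mul_p p

lemma uMod_pow_p (p : ℕ) : uMod p ^ p = 1 := by
  apply Units.ext
  rw [Units.val_pow_eq_pow_val]
  show ((1 : ZMod (p^2)) - p) ^ p = 1
  rw [show (1 : ZMod (p^2)) - p = 1 + (-1) * p by ring, one_add_mul_p_pow]
  linear_combination -p_mul_p p

def X0 (p : ℕ) : Equiv.Perm (ZMod (p^2)) := Equiv.addRight 1
def Y0 (p : ℕ) : Equiv.Perm (ZMod (p^2)) := Units.mulLeft (uMod p)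

lemma X0_pow (p n : ℕ) (z : ZMod (p^2)) : (X0 p ^ n) z = z + n := by
  induction n generalizing z with
  | zero => simp
  | succ n ih =>
    rw [pow_succ (X0 p) n, Equiv.Perm.mul_apply, ih]
    simp [X0]; push_cast; ring

lemma Y0_pow (p n : ℕ) (z : ZMod (p^2)) : (Y0 p ^ n) z = ((uMod p ^ n : (ZMod (p^2))ˣ) : ZMod (p^2)) * z := by
  induction n generalizing z with
  | zero => simp
  | succ n ih =>
    rw [pow_succ (Y0 p) n, Equiv.Perm.mul_apply, ih, pow_succ (uMod p) n]
    simp only [Y0, Units.mulLeft_apply]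
    push_cast; ring

def fGen (p : ℕ) : Fin 2 → Equiv.Perm (ZMod (p^2)) := ![X0 p, Y0 p]

lemma lift_rels (p : ℕ) : ∀ r ∈ hpRels p, FreeGroup.lift (fGen p) r = 1 := by
  have key : X0 p * Y0 p = Y0 p * X0 p * X0 p ^ p := by
    apply Equiv.ext; intro z
    simp only [Equiv.Perm.mul_apply, X0_pow]
    simp only [X0, Y0, Units.mulLeft_apply, Equiv.coe_addRight]
    have hu : ((uMod p : (ZMod (p^2))ˣ) : ZMod (p^2)) = 1 - p := rfl
    rw [hu]
    linear_combination p_mul_p p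
  rintro r (rfl | rfl | rfl)
  · simp only [map_pow, FreeGroup.lift_apply_of]
    show (fGen p 0) ^ p ^ 2 = 1
    apply Equiv.ext; intro z
    have : fGen p 0 = X0 p := rfl
    rw [this, X0_pow]
    simp [ZMod.natCast_self]
  · simp only [map_pow, FreeGroup.lift_apply_of]
    show (fGen p 1) ^ p = 1
    apply Equiv.ext; intro z
    have : fGen p 1 = Y0 p := rfl
    rw [this, Y0_pow, uMod_pow_p]
    simp
  · simp only [map_mul, map_inv, map_pow, FreeGroup.lift_apply_of]
    have h0 : fGen p 0 = X0 p := rfl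
    have h1 : fGen p 1 = Y0 p := rfl
    rw [h0, h1, mul_assoc ((X0 p)⁻¹ * (Y0 p)⁻¹) (X0 p) (Y0 p), key]
    group

def φmod (p : ℕ) : HpGroup p →* Equiv.Perm (ZMod (p^2)) := PresentedGroup.toGroup (lift_rels p)

lemma φmod_X (p : ℕ) : φmod p (hpX p) = X0 p := PresentedGroup.toGroup.of (lift_rels p)

lemma Xp_ne_one (p : ℕ) (hp : p.Prime) : hpX p ^ p ≠ 1 := by
  intro h
  have h2 : (X0 p) ^ p = 1 := by rw [← φmod_X, ← map_pow, h, map_one]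
  have h3 : ((0 : ZMod (p^2)) + p) = 0 := by
    conv_rhs => rw [show (0 : ZMod (p^2)) = (1 : Equiv.Perm (ZMod (p^2))) 0 from rfl, ← h2, X0_pow]
  haveI : NeZero (p^2) := ⟨pow_ne_zero 2 hp.ne_zero⟩
  rw [zero_add, ZMod.natCast_eq_zero_iff] at h3
  have := Nat.le_of_dvd hp.pos h3
  nlinarith [hp.two_le]

lemma orderXp (p : ℕ) (hp : p.Prime) : orderOf (hpX p ^ p) = p := by
  haveI := Fact.mk hp
  refine orderOf_eq_prime ?_ (Xp_ne_one p hp)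
  rw [← pow_mul, ← pow_two]
  exact relX p

lemma Xp_zpow_iff (p : ℕ) (hp : p.Prime) (k : ℤ) : (hpX p ^ p) ^ k = 1 ↔ (p : ℤ) ∣ k := by
  rw [← orderOf_dvd_iff_zpow_eq_one, orderXp p hp]

section Helpers
variable {G : Type*} [Group G]

lemma aut_zpow_fix (α : MulAut G) (x : G) (hx : α x = x) : ∀ b : ℤ, (α ^ b) x = x := by
  have hinv : α⁻¹ x = x := by
    conv_lhs => rw [← hx]
    rw [MulAut.inv_def]
    exact α.symm_apply_apply x
  intro b
  induction b using Int.induction_on with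
  | zero => simp
  | succ k ih => rw [zpow_add_one, MulAut.mul_apply, hx, ih]
  | pred k ih => rw [zpow_sub_one, MulAut.mul_apply, hinv, ih]

lemma aut_zpow_shift (α : MulAut G) (x z : G) (hx : α x = x * z) (hz : α z = z) :
    ∀ b : ℤ, (α ^ b) x = x * z ^ b := by
  have hzf := aut_zpow_fix α z hz
  have hinv : α⁻¹ x = x * z⁻¹ := by
    have h : α (x * z⁻¹) = x := by rw [map_mul, hx, map_inv, hz]; group
    conv_lhs => rw [← h]
    rw [MulAut.inv_def]
    exact α.symm_apply_apply _
  intro b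
  induction b using Int.induction_on with
  | zero => simp
  | succ k ih =>
    rw [zpow_add_one, MulAut.mul_apply, hx, map_mul, ih, hzf, mul_assoc, ← zpow_add_one]
  | pred k ih =>
    rw [zpow_sub_one, MulAut.mul_apply, hinv, map_mul, ih, map_inv, hzf, mul_assoc,
      ← zpow_sub_one]

end Helpers

lemma XpPowP (p : ℕ) : (hpX p ^ p) ^ p = (1 : HpGroup p) := by
  rw [← pow_mul, ← pow_two]; exact relX p

lemma conjYXp (p : ℕ) : (hpY p)⁻¹ * hpX p ^ p * hpY p = hpX p ^ p := by
  have h1 : (hpY p)⁻¹ * hpX p ^ p * hpY p = ((hpY p)⁻¹ * hpX p * hpY p) ^ p := by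
    have := conj_pow (i := p) (a := (hpY p)⁻¹) (b := hpX p)
    rw [inv_inv] at this
    rw [this]
  rw [h1, relC p]
  have hc : Commute (hpX p) (hpX p ^ p) := (Commute.refl (hpX p)).pow_right p
  rw [hc.mul_pow, XpPowP, mul_one]

lemma commYXp (p : ℕ) : hpY p * (hpX p ^ p) = hpX p ^ p * hpY p := by
  have h3 := congrArg (fun w => hpY p * w) (conjYXp p)
  rw [← h3]; group

lemma centralXp (p : ℕ) : ∀ g : HpGroup p, g * (hpX p ^ p) = (hpX p ^ p) * g := by
  intro g
  have h : g ∈ Subgroup.centralizer {hpX p ^ p} := by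
    apply PresentedGroup.generated_by
    intro j
    rw [Subgroup.mem_centralizer_iff]
    intro h hh
    rw [Set.mem_singleton_iff] at hh
    subst hh
    fin_cases j
    · show hpX p ^ p * hpX p = hpX p * hpX p ^ p
      exact (pow_mul_comm' (hpX p) p)
    · show hpX p ^ p * hpY p = hpY p * hpX p ^ p
      exact (commYXp p).symm
  exact (Subgroup.mem_centralizer_iff.mp h (hpX p ^ p) rfl).symm

lemma centerXpZ (p : ℕ) (k : ℤ) : (hpX p ^ p) ^ k ∈ Subgroup.center (HpGroup p) := by
  refine Subgroup.zpow_mem _ ?_ k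
  rw [Subgroup.mem_center_iff]
  exact fun g => centralXp p g

lemma commuteXpZ (p : ℕ) (g : HpGroup p) (k : ℤ) : Commute g ((hpX p ^ p) ^ k) :=
  Commute.zpow_right (centralXp p g) k

lemma zpowXp (p : ℕ) (k : ℤ) : (hpX p ^ p) ^ k = hpX p ^ ((p : ℤ) * k) := by
  rw [← zpow_natCast (hpX p) p, ← zpow_mul]

lemma conjY_X (p : ℕ) : hpY p * hpX p * (hpY p)⁻¹ = hpX p * (hpX p ^ p)⁻¹ := by
  have e1 : hpY p * (hpX p * hpX p ^ p) * (hpY p)⁻¹ = hpX p := by rw [← relC p]; group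
  have e4 : hpY p * hpX p ^ p * (hpY p)⁻¹ = hpX p ^ p := by rw [commYXp]; group
  have e3 : hpY p * hpX p * (hpY p)⁻¹ * (hpY p * hpX p ^ p * (hpY p)⁻¹) = hpX p := by
    have free : hpY p * hpX p * (hpY p)⁻¹ * (hpY p * hpX p ^ p * (hpY p)⁻¹)
        = hpY p * (hpX p * hpX p ^ p) * (hpY p)⁻¹ := by group
    rw [free, e1]
  rw [e4] at e3
  exact eq_mul_inv_of_mul_eq e3

lemma conjYb_X (p : ℕ) (b : ℤ) :
    MulAut.conj (hpY p ^ b) (hpX p) = hpX p * (hpX p ^ p) ^ (-b) := by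
  have hfix : MulAut.conj (hpY p) ((hpX p ^ p)⁻¹) = (hpX p ^ p)⁻¹ := by
    rw [map_inv, MulAut.conj_apply]
    have e4 : hpY p * hpX p ^ p * (hpY p)⁻¹ = hpX p ^ p := by rw [commYXp]; group
    rw [e4]
  have hx : MulAut.conj (hpY p) (hpX p) = hpX p * (hpX p ^ p)⁻¹ := by
    rw [MulAut.conj_apply]; exact conjY_X p
  have := aut_zpow_shift (MulAut.conj (hpY p)) (hpX p) ((hpX p ^ p)⁻¹) hx hfix b
  rw [← map_zpow MulAut.conj (hpY p) b] at this
  rw [this, inv_zpow, ← zpow_neg]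

lemma comm1 (p : ℕ) (a b : ℤ) :
    hpY p ^ b * hpX p ^ a = hpX p ^ a * (hpX p ^ p) ^ (-(a * b)) * hpY p ^ b := by
  have h : MulAut.conj (hpY p ^ b) (hpX p ^ a) = hpX p ^ a * (hpX p ^ p) ^ (-(a * b)) := by
    rw [map_zpow, conjYb_X p b, Commute.mul_zpow (commuteXpZ p (hpX p) (-b)) a]
    congr 1
    rw [← zpow_mul]
    congr 1
    ring
  have h2 : hpY p ^ b * hpX p ^ a = MulAut.conj (hpY p ^ b) (hpX p ^ a) * hpY p ^ b := by
    rw [MulAut.conj_apply]; group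
  rw [h2, h]

def nfSet (p : ℕ) : Subgroup (HpGroup p) where
  carrier := {g | ∃ a b : ℤ, g = hpX p ^ a * hpY p ^ b}
  one_mem' := ⟨0, 0, by simp⟩
  mul_mem' := by
    rintro g h ⟨a, b, rfl⟩ ⟨c, d, rfl⟩
    refine ⟨a + ((p : ℤ) * (-(c * b)) + c), b + d, ?_⟩
    rw [show hpX p ^ a * hpY p ^ b * (hpX p ^ c * hpY p ^ d)
        = hpX p ^ a * (hpY p ^ b * hpX p ^ c) * hpY p ^ d from by group,
      comm1 p c b, zpowXp]
    rw [zpow_add (hpX p) a, zpow_add (hpX p) ((p:ℤ) * (-(c*b))) c, zpow_add (hpY p) b d]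
    have hc : hpX p ^ ((p:ℤ) * (-(c*b))) * hpX p ^ c = hpX p ^ c * hpX p ^ ((p:ℤ) * (-(c*b))) := by
      rw [← zpow_add, ← zpow_add]; congr 1; ring
    rw [hc]; group
  inv_mem' := by
    rintro g ⟨a, b, rfl⟩
    refine ⟨-a + (p : ℤ) * (-(a * b)), -b, ?_⟩
    rw [show (hpX p ^ a * hpY p ^ b)⁻¹ = hpY p ^ (-b) * hpX p ^ (-a) from by group,
      comm1 p (-a) (-b), zpowXp]
    rw [zpow_add (hpX p) (-a) ((p:ℤ) * (-(a*b)))]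
    have : (p:ℤ) * -(-a * -b) = (p:ℤ) * (-(a*b)) := by ring
    rw [this]

lemma normalForm (p : ℕ) (g : HpGroup p) : ∃ a b : ℤ, g = hpX p ^ a * hpY p ^ b := by
  refine PresentedGroup.generated_by _ (nfSet p) ?_ g
  intro j; fin_cases j
  · exact ⟨1, 0, by simp [hpX]⟩
  · exact ⟨0, 1, by simp [hpY]⟩

lemma autEq (p : ℕ) (α β : MulAut (HpGroup p)) (h0 : α (hpX p) = β (hpX p))
    (h1 : α (hpY p) = β (hpY p)) : α = β := by
  have h : ∀ g, α.toMonoidHom g = β.toMonoidHom g := by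
    intro g
    refine PresentedGroup.generated_by _ (α.toMonoidHom.eqLocus β.toMonoidHom) ?_ g
    intro j; fin_cases j
    · exact h0
    · exact h1
  exact MulEquiv.ext h

lemma swapC (p : ℕ) (g : HpGroup p) (k : ℤ) :
    g * (hpX p ^ p) ^ k = (hpX p ^ p) ^ k * g := (commuteXpZ p g k).eq

lemma comm1' (p : ℕ) (d : ℤ) :
    hpY p ^ d * hpX p = hpX p * (hpX p ^ p) ^ (-d) * hpY p ^ d := by
  simpa using comm1 p 1 d

lemma prodCF (p : ℕ) (c e d a f b : ℤ) :
    (hpX p ^ c * (hpX p ^ p) ^ e * hpY p ^ d) * (hpX p ^ a * (hpX p ^ p) ^ f * hpY p ^ b)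
      = hpX p ^ (c + a) * (hpX p ^ p) ^ (e + f - a * d) * hpY p ^ (d + b) := by
  calc (hpX p ^ c * (hpX p ^ p) ^ e * hpY p ^ d) * (hpX p ^ a * (hpX p ^ p) ^ f * hpY p ^ b)
      = hpX p ^ c * (hpX p ^ p) ^ e * (hpY p ^ d * hpX p ^ a) * ((hpX p ^ p) ^ f * hpY p ^ b) := by
        group
    _ = hpX p ^ c * (hpX p ^ p) ^ e * (hpX p ^ a * (hpX p ^ p) ^ (-(a * d)) * hpY p ^ d)
          * ((hpX p ^ p) ^ f * hpY p ^ b) := by rw [comm1 p a d]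
    _ = hpX p ^ c * (hpX p ^ p) ^ e * hpX p ^ a * (hpX p ^ p) ^ (-(a * d))
          * (hpY p ^ d * (hpX p ^ p) ^ f) * hpY p ^ b := by group
    _ = hpX p ^ c * (hpX p ^ p) ^ e * hpX p ^ a * (hpX p ^ p) ^ (-(a * d))
          * ((hpX p ^ p) ^ f * hpY p ^ d) * hpY p ^ b := by rw [swapC p (hpY p ^ d) f]
    _ = hpX p ^ (c + a) * (hpX p ^ p) ^ (e + f - a * d) * hpY p ^ (d + b) := by
        rw [zpowXp p e, zpowXp p (-(a * d)), zpowXp p f, zpowXp p (e + f - a * d)]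
        group

lemma permT_mul {G : Type*} [Group G] (α β : MulAut G) (u v : G) :
    (α.toEquiv.trans (Equiv.mulRight u)) * (β.toEquiv.trans (Equiv.mulRight v))
      = (α * β : MulAut G).toEquiv.trans (Equiv.mulRight (α v * u)) := by
  apply Equiv.ext; intro z
  simp only [Equiv.Perm.mul_apply, Equiv.trans_apply, Equiv.coe_mulRight]
  show α (β z * v) * u = (α * β) z * (α v * u)
  rw [map_mul, MulAut.mul_apply, mul_assoc]

lemma permT_inv {G : Type*} [Group G] (α : MulAut G) (u : G) :
    (α.toEquiv.trans (Equiv.mulRight u))⁻¹ = (α⁻¹ : MulAut G).toEquiv.trans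
      (Equiv.mulRight ((α⁻¹ : MulAut G) u⁻¹)) := by
  refine inv_eq_of_mul_eq_one_right ?_
  rw [permT_mul]
  have h1 : α ((α⁻¹ : MulAut G) u⁻¹) = u⁻¹ := by
    rw [MulAut.inv_def]; exact α.apply_symm_apply _
  rw [h1, inv_mul_cancel, mul_inv_cancel]
  apply Equiv.ext; intro z
  simp

lemma keyclose (p : ℕ) (a b c d k1 k2 : ℤ) :
    hpX p ^ c * (hpX p ^ p) ^ k1 * (hpY p ^ d * (hpX p ^ p) ^ k2) * (hpX p ^ a * hpY p ^ b)
      = hpX p ^ (a + c) * (hpX p ^ p) ^ (k1 + k2 - a * d) * hpY p ^ (b + d) := by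
  calc hpX p ^ c * (hpX p ^ p) ^ k1 * (hpY p ^ d * (hpX p ^ p) ^ k2) * (hpX p ^ a * hpY p ^ b)
      = hpX p ^ c * (hpX p ^ p) ^ k1 * ((hpX p ^ p) ^ k2 * hpY p ^ d) * (hpX p ^ a * hpY p ^ b) := by
        rw [swapC p (hpY p ^ d) k2]
    _ = (hpX p ^ c * (hpX p ^ p) ^ (k1 + k2) * hpY p ^ d)
          * (hpX p ^ a * (hpX p ^ p) ^ (0 : ℤ) * hpY p ^ b) := by
        rw [zpow_zero, mul_one, zpowXp p k1, zpowXp p k2, zpowXp p (k1 + k2)]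
        group
    _ = hpX p ^ (c + a) * (hpX p ^ p) ^ (k1 + k2 + 0 - a * d) * hpY p ^ (d + b) := prodCF p c (k1 + k2) d a 0 b
    _ = hpX p ^ (a + c) * (hpX p ^ p) ^ (k1 + k2 - a * d) * hpY p ^ (b + d) := by
        rw [show c + a = a + c by ring, show k1 + k2 + 0 - a * d = k1 + k2 - a * d by ring,
          show d + b = b + d by ring]


/-- For an odd prime `p`, `H_p = ⟨x, y : x^(p²) = y^p = 1, [x,y] = x^p⟩` and
`γ = γ_t` given by `γ_t(x) : x ↦ x, y ↦ x^(-pt) y`,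
`γ_t(y) : x ↦ x^(1+pt), y ↦ y`, killing `Z(H_p) = ⟨x^p⟩`, with
`ν(h) : x ↦ γ(h)(x) * h`, one has (paper's commutator convention rendered in
Mathlib's convention) `[ν(x), ν(y^d)] = ν(x^(pd(1+2t)))` for all integers
`d`; in particular the regular subgroup `ν(H_p)` is abelian if and only if
`t ≡ -1/2 (mod p)`, i.e. `p ∣ 2t + 1`. -/
theorem stmt_16 (p : ℕ) (hp : p.Prime) (hodd : Odd p) (t : ℤ)
    (γ : HpGroup p → MulAut (HpGroup p))
    (hx1 : (γ (hpX p)) (hpX p) = hpX p)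
    (hx2 : (γ (hpX p)) (hpY p) = hpX p ^ (-((p : ℤ) * t)) * hpY p)
    (hy1 : (γ (hpY p)) (hpX p) = hpX p ^ (1 + (p : ℤ) * t))
    (hy2 : (γ (hpY p)) (hpY p) = hpY p)
    (hz : ∀ z ∈ Subgroup.center (HpGroup p), γ z = 1)
    (hγ : ∀ g h : HpGroup p, γ (g * h) = γ g * γ h)
    (ν : HpGroup p → Equiv.Perm (HpGroup p))
    (hν : ∀ h : HpGroup p, ν h = (γ h).toEquiv.trans (Equiv.mulRight h)) :
    (∀ d : ℤ,
      ν (hpY p ^ d) * ν (hpX p) * (ν (hpY p ^ d))⁻¹ * (ν (hpX p))⁻¹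
        = ν (hpX p ^ ((p : ℤ) * d * (1 + 2 * t)))) ∧
    ((∀ g h : HpGroup p, ν g * ν h = ν h * ν g) ↔ (p : ℤ) ∣ 2 * t + 1) := by
  have γzpow : ∀ (g : HpGroup p) (n : ℤ), γ (g ^ n) = (γ g) ^ n :=
    fun g n => map_zpow (MonoidHom.mk' γ hγ) g n
  have hzXp : ∀ k : ℤ, γ ((hpX p ^ p) ^ k) = 1 := fun k => hz _ (centerXpZ p k)
  have hx2' : γ (hpX p) (hpY p) = (hpY p) * (hpX p ^ p) ^ (-t) := by
    rw [hx2]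
    have e : (hpX p) ^ (-((p : ℤ) * t)) = (hpX p ^ p) ^ (-t) := by rw [zpowXp]; congr 1; ring
    rw [e, ← swapC p (hpY p) (-t)]
  have hy1' : γ (hpY p) (hpX p) = (hpX p) * (hpX p ^ p) ^ t := by
    rw [hy1, zpow_add, zpow_one]
    congr 1
    rw [zpowXp]
  have gXfix : γ (hpX p) (hpX p ^ p) = (hpX p ^ p) := by rw [map_pow, hx1]
  have gYXp : γ (hpY p) (hpX p ^ p) = (hpX p ^ p) := by
    rw [map_pow, hy1', Commute.mul_pow (commuteXpZ p (hpX p) t)]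
    have e : ((hpX p ^ p) ^ t) ^ p = (1 : HpGroup p) := by
      rw [← zpow_natCast ((hpX p ^ p) ^ t) p, ← zpow_mul, mul_comm, zpow_mul, zpow_natCast, XpPowP,
        one_zpow]
    rw [e, mul_one]
  have A2 : ∀ a : ℤ, ((γ (hpX p)) ^ a) (hpX p) = (hpX p) := fun a => aut_zpow_fix _ _ hx1 a
  have A4 : ∀ b : ℤ, ((γ (hpY p)) ^ b) (hpY p) = (hpY p) := fun b => aut_zpow_fix _ _ hy2 b
  have A1 : ∀ a : ℤ, ((γ (hpX p)) ^ a) (hpY p) = (hpY p) * (hpX p ^ p) ^ (-t * a) := by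
    intro a
    have hzfix : γ (hpX p) ((hpX p ^ p) ^ (-t)) = (hpX p ^ p) ^ (-t) := by rw [map_zpow, gXfix]
    have h := aut_zpow_shift (γ (hpX p)) (hpY p) ((hpX p ^ p) ^ (-t)) hx2' hzfix a
    rw [h, ← zpow_mul]
  have A3 : ∀ b : ℤ, ((γ (hpY p)) ^ b) (hpX p) = (hpX p) * (hpX p ^ p) ^ (t * b) := by
    intro b
    have hzfix : γ (hpY p) ((hpX p ^ p) ^ t) = (hpX p ^ p) ^ t := by rw [map_zpow, gYXp]
    have h := aut_zpow_shift (γ (hpY p)) (hpX p) ((hpX p ^ p) ^ t) hy1' hzfix b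
    rw [h, ← zpow_mul]
  have A5 : ∀ (a k : ℤ), ((γ (hpX p)) ^ a) ((hpX p ^ p) ^ k) = (hpX p ^ p) ^ k := by
    intro a k
    have h : ((γ (hpX p)) ^ a) (hpX p ^ p) = (hpX p ^ p) := aut_zpow_fix _ _ gXfix a
    rw [map_zpow, h]
  have γdec : ∀ a b : ℤ, γ ((hpX p) ^ a * (hpY p) ^ b) = (γ (hpX p)) ^ a * (γ (hpY p)) ^ b := by
    intro a b; rw [hγ, γzpow, γzpow]
  have commA : (γ (hpX p)) * (γ (hpY p)) = (γ (hpY p)) * (γ (hpX p)) := by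
    apply autEq
    · rw [MulAut.mul_apply, MulAut.mul_apply, hx1, hy1', map_mul, hx1, map_zpow, gXfix]
    · rw [MulAut.mul_apply, MulAut.mul_apply, hy2, hx2', map_mul, hy2, map_zpow, gYXp]
  have commAll : ∀ g h : HpGroup p, γ g * γ h = γ h * γ g := by
    intro g h
    obtain ⟨a, b, rfl⟩ := normalForm p g
    obtain ⟨c, d, rfl⟩ := normalForm p h
    rw [γdec, γdec]
    have c0 : Commute (γ (hpX p)) (γ (hpY p)) := commA
    have hAC : Commute ((γ (hpX p)) ^ a) ((γ (hpX p)) ^ c) := (Commute.refl _).zpow_zpow a c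
    have hAD : Commute ((γ (hpX p)) ^ a) ((γ (hpY p)) ^ d) := c0.zpow_zpow a d
    have hBC : Commute ((γ (hpY p)) ^ b) ((γ (hpX p)) ^ c) := c0.symm.zpow_zpow b c
    have hBD : Commute ((γ (hpY p)) ^ b) ((γ (hpY p)) ^ d) := (Commute.refl _).zpow_zpow b d
    exact ((hAC.mul_right hAD).mul_left (hBC.mul_right hBD)).eq
  have appinv : ∀ (α : MulAut (HpGroup p)) (w : HpGroup p), α (α⁻¹ w) = w := by
    intro α w
    rw [MulAut.inv_def]
    exact α.apply_symm_apply w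
  have keyform : ∀ a b c d : ℤ,
      γ ((hpX p) ^ a * (hpY p) ^ b) ((hpX p) ^ c * (hpY p) ^ d) * ((hpX p) ^ a * (hpY p) ^ b)
        = (hpX p) ^ (a + c) * (hpX p ^ p) ^ (t * (b * c) - t * (a * d) - a * d) * (hpY p) ^ (b + d) := by
    intro a b c d
    rw [γdec a b, MulAut.mul_apply, map_mul, map_zpow, map_zpow, A3 b, A4 b,
      Commute.mul_zpow (commuteXpZ p (hpX p) (t * b)) c, ← zpow_mul,
      map_mul, map_mul, A5 a (t * b * c), map_zpow, map_zpow, A2 a, A1 a,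
      Commute.mul_zpow (commuteXpZ p (hpY p) (-t * a)) d, ← zpow_mul,
      keyclose p a b c d (t * b * c) (-t * a * d),
      show t * b * c + -t * a * d - a * d = t * (b * c) - t * (a * d) - a * d by ring]
  constructor
  · intro d
    simp only [hν]
    rw [show ((γ ((hpY p) ^ d)).toEquiv.trans (Equiv.mulRight ((hpY p) ^ d)))
          * ((γ (hpX p)).toEquiv.trans (Equiv.mulRight (hpX p)))
          * ((γ ((hpY p) ^ d)).toEquiv.trans (Equiv.mulRight ((hpY p) ^ d)))⁻¹
          * ((γ (hpX p)).toEquiv.trans (Equiv.mulRight (hpX p)))⁻¹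
        = (((γ ((hpY p) ^ d)).toEquiv.trans (Equiv.mulRight ((hpY p) ^ d)))
            * ((γ (hpX p)).toEquiv.trans (Equiv.mulRight (hpX p))))
          * (((γ (hpX p)).toEquiv.trans (Equiv.mulRight (hpX p)))
            * ((γ ((hpY p) ^ d)).toEquiv.trans (Equiv.mulRight ((hpY p) ^ d))))⁻¹ from by group]
    rw [permT_mul, permT_mul, commAll (hpX p) ((hpY p) ^ d), permT_inv, permT_mul, mul_inv_cancel,
      appinv]
    have hu0 : γ ((hpY p) ^ d) (hpX p) * (hpY p) ^ d = (hpX p) * (hpX p ^ p) ^ (t * d) * (hpY p) ^ d := by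
      rw [γzpow, A3 d]
    have hv0 : γ (hpX p) ((hpY p) ^ d) * (hpX p) = (hpX p) * (hpX p ^ p) ^ (-t * d + -d) * (hpY p) ^ d := by
      rw [map_zpow, hx2', Commute.mul_zpow (commuteXpZ p (hpY p) (-t)) d, ← zpow_mul,
        swapC p ((hpY p) ^ d) (-t * d), mul_assoc, comm1' p d]
      rw [zpowXp p (-t * d), zpowXp p (-d), zpowXp p (-t * d + -d)]
      group
    have uv : γ ((hpY p) ^ d) (hpX p) * (hpY p) ^ d = (γ (hpX p) ((hpY p) ^ d) * (hpX p)) * (hpX p ^ p) ^ (d * (1 + 2 * t)) := by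
      rw [hu0, hv0, mul_assoc ((hpX p) * (hpX p ^ p) ^ (-t * d + -d)) ((hpY p) ^ d) ((hpX p ^ p) ^ (d * (1 + 2 * t))),
        swapC p ((hpY p) ^ d) (d * (1 + 2 * t))]
      rw [zpowXp p (t * d), zpowXp p (-t * d + -d), zpowXp p (d * (1 + 2 * t))]
      group
    have hfin : (γ (hpX p) ((hpY p) ^ d) * (hpX p))⁻¹ * (γ ((hpY p) ^ d) (hpX p) * (hpY p) ^ d) = (hpX p ^ p) ^ (d * (1 + 2 * t)) := by
      rw [uv, inv_mul_cancel_left]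
    rw [hfin]
    have em : (hpX p) ^ ((p : ℤ) * d * (1 + 2 * t)) = (hpX p ^ p) ^ (d * (1 + 2 * t)) := by
      rw [zpowXp]; congr 1; ring
    rw [em, hzXp]
  · constructor
    · intro hcomm
      have h := hcomm (hpX p) (hpY p)
      have h1 := Equiv.ext_iff.mp h 1
      simp only [hν, Equiv.Perm.mul_apply, Equiv.trans_apply, Equiv.coe_mulRight] at h1
      have h1' : (γ (hpX p)) ((γ (hpY p)) (1 : HpGroup p) * hpY p) * hpX p
          = (γ (hpY p)) ((γ (hpX p)) (1 : HpGroup p) * hpX p) * hpY p := h1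
      rw [map_one, map_one, one_mul, one_mul, hx2', hy1'] at h1'
      have c11 : (hpY p) * (hpX p) = (hpX p) * (hpX p ^ p) ^ (-1 : ℤ) * (hpY p) := by simpa using comm1' p 1
      have lhs2 : ((hpY p) * (hpX p ^ p) ^ (-t)) * (hpX p) = (hpX p) * (hpX p ^ p) ^ (-t + -1) * (hpY p) := by
        rw [swapC p (hpY p) (-t), mul_assoc, c11]
        rw [zpowXp p (-t), zpowXp p (-1 : ℤ), zpowXp p (-t + -1)]
        group
      rw [lhs2] at h1'
      have he : (hpX p ^ p) ^ (-t + -1) = (hpX p ^ p) ^ t := mul_left_cancel (mul_right_cancel h1')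
      have h3 : (hpX p ^ p) ^ (2 * t + 1) = (1 : HpGroup p) := by
        have e2 : (hpX p ^ p) ^ (2 * t + 1) = (hpX p ^ p) ^ t * ((hpX p ^ p) ^ (-t + -1))⁻¹ := by
          rw [← zpow_neg, ← zpow_add]; congr 1; ring
        rw [e2, he, mul_inv_cancel]
      exact (Xp_zpow_iff p hp (2 * t + 1)).mp h3
    · intro hdvd g h
      obtain ⟨a, b, rfl⟩ := normalForm p g
      obtain ⟨c, d, rfl⟩ := normalForm p h
      simp only [hν]
      rw [permT_mul, permT_mul, commAll ((hpX p) ^ a * (hpY p) ^ b) ((hpX p) ^ c * (hpY p) ^ d)]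
      have hXp1 : (hpX p ^ p) ^ (2 * t + 1) = (1 : HpGroup p) := (Xp_zpow_iff p hp _).mpr hdvd
      have hE : (hpX p ^ p) ^ (t * (b * c) - t * (a * d) - a * d)
          = (hpX p ^ p) ^ (t * (d * a) - t * (c * b) - c * b) := by
        have e3 : (hpX p ^ p) ^ (t * (b * c) - t * (a * d) - a * d)
            = (hpX p ^ p) ^ (t * (d * a) - t * (c * b) - c * b) * ((hpX p ^ p) ^ (2 * t + 1)) ^ (b * c - a * d) := by
          rw [← zpow_mul, ← zpow_add]; congr 1; ring
        rw [e3, hXp1, one_zpow, mul_one]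
      have keq : γ ((hpX p) ^ a * (hpY p) ^ b) ((hpX p) ^ c * (hpY p) ^ d) * ((hpX p) ^ a * (hpY p) ^ b)
          = γ ((hpX p) ^ c * (hpY p) ^ d) ((hpX p) ^ a * (hpY p) ^ b) * ((hpX p) ^ c * (hpY p) ^ d) := by
        rw [keyform a b c d, keyform c d a b, show c + a = a + c by ring,
          show d + b = b + d by ring, hE]
      rw [keq]
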